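/- Let n ≥ 2, let a_1,…,a_n be integers, and let ε ∈ {1,−1}. Then M_n(a_1,…,a_n) = ε·S if and only if M_{n−1}(a_2,…,a_{n−1}, a_n + a_1) = ε·Id. -/
import Mathlib


/-- The elementary matrix `[[a, -1], [1, 0]]`. -/
def genMat (a : ℤ) : Matrix (Fin 2) (Fin 2) ℤ := !![a, -1; 1, 0]

/-- `Mprod [a₁, …, aₙ] = [[aₙ,-1],[1,0]] ⋯ [[a₁,-1],[1,0]]`. -/
def Mprod (l : List ℤ) : Matrix (Fin 2) (Fin 2) ℤ := ((l.map genMat).reverse).prod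

lemma Mprod_cons (a : ℤ) (l : List ℤ) : Mprod (a :: l) = Mprod l * genMat a := by
  simp [Mprod]

lemma Mprod_concat (a : ℤ) (l : List ℤ) : Mprod (l ++ [a]) = genMat a * Mprod l := by
  simp [Mprod]

lemma key (p q r s a₁ aₙ ε : ℤ) :
    genMat aₙ * !![p,q;r,s] * genMat a₁ = ε • !![0,-1;1,0] ↔
    genMat (aₙ+a₁) * !![p,q;r,s] = ε • (1 : Matrix (Fin 2) (Fin 2) ℤ) := by
  rw [← Matrix.ext_iff, ← Matrix.ext_iff]
  simp [Fin.forall_fin_two, genMat, Matrix.mul_apply, Fin.sum_univ_two, Matrix.one_apply]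
  constructor
  · rintro ⟨⟨h1, h2⟩, h3, h4⟩
    refine ⟨⟨by linear_combination -h2 + a₁*h4, by linear_combination h1 + a₁*h3 + a₁*h2 - a₁*a₁*h4⟩, h4, by linear_combination h3 - a₁*h4⟩
  · rintro ⟨⟨h1, h2⟩, h3, h4⟩
    refine ⟨⟨by linear_combination a₁*h1 - a₁*a₁*h3 + h2 - a₁*h4, by linear_combination -h1 + a₁*h3⟩, by linear_combination a₁*h3 + h4, h3⟩

/-- For `n ≥ 2`: `Mₙ(a₁,…,aₙ) = ε·S ↔ M_{n-1}(a₂,…,a_{n-1}, aₙ + a₁) = ε·Id`.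
Here the tuple `(a₁,…,aₙ)` is written `a₁ :: m ++ [aₙ]` with `m = (a₂,…,a_{n-1})`. -/
theorem stmt9 (m : List ℤ) (a₁ aₙ ε : ℤ) (hε : ε = 1 ∨ ε = -1) :
    Mprod (a₁ :: m ++ [aₙ]) = ε • !![0, -1; 1, 0] ↔
    Mprod (m ++ [aₙ + a₁]) = ε • (1 : Matrix (Fin 2) (Fin 2) ℤ) := by
  rw [List.cons_append, Mprod_cons, Mprod_concat, Mprod_concat,
    Matrix.eta_fin_two (Mprod m)]
  exact key _ _ _ _ _ _ _
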